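/- arXiv:2309.10138 — 4 statements merged into one kernel-verified Lean document; each statement's English description precedes it below -/
import Mathlib

section
/- There exist constants c > 0 and C > 0, depending only on upper bounds for |q_0|, |a|, C_TAME and T, such that for every tame discrete controlled process with parameter a as in the context, every 0 ≤ ν < N, and every Q with C ≤ Q ≤ (Δt_ν)^{−1/1000}, almost surely on the event {|q_ν| ≤ Q}: Prob[ |Δq_ν| + |Δζ_{1,ν}| + |Δζ_{2,ν}| > (Δt_ν)^{2/5} | F_ν ] ≤ C·(Δt_ν)^{1000}. -/
/-!
On the event `|q_ν| ≤ Q` the three increments are controlled by the noise alone: if moreover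
`|ΔW_ν| ≤ r := Δt^{2/5} / (4Q)`, their sum is at most `C Q² Δt + 2 Q r ≤ Δt^{2/5}`, because
`Q ≤ Δt^{-1/1000}` makes the drift terms of order `Q² Δt` negligible. So the large-increment
event lies in `{|q_ν| > Q} ∪ {|ΔW_ν| ≥ r}`. The first set is `F_ν`-measurable and the second is
independent of `F_ν`, so on `{|q_ν| ≤ Q}` the conditional probability is at most
`P(|ΔW_ν| ≥ r)`, which the sub-Gaussian tail bounds by `2 exp(-r² / (2 Δt~))`. As
`r² / Δt~ ≳ Δt^{-1/5 - 1/500}`, the bound `exp(-1/y) ≤ n! yⁿ` makes this `O(Δt^{1000})`.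
-/

open MeasureTheory ProbabilityTheory Real

noncomputable def dtStar (a dt : ℝ) : ℝ := if a = 0 then dt else (Real.exp (a * dt) - 1) / a

noncomputable def dtTilde (a dt : ℝ) : ℝ :=
  if a = 0 then dt else (Real.exp (2 * a * dt) - 1) / (2 * a)

def IsPartition (N : ℕ) (T : ℝ) (t : ℕ → ℝ) : Prop :=
  t 0 = 0 ∧ t N = T ∧ ∀ ν < N, t ν < t (ν + 1)

noncomputable def dtMax (N : ℕ) (t : ℕ → ℝ) : ℝ := ⨆ ν : Fin N, (t (ν + 1) - t ν)

structure TameProcess {Ω : Type*} {mΩ : MeasurableSpace Ω} (μ : Measure Ω)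
    (N : ℕ) (t : ℕ → ℝ) (a q0 Ct : ℝ) (F : Filtration ℕ mΩ)
    (q u ΔW : ℕ → Ω → ℝ) : Prop where
  w_meas : ∀ ν < N, Measurable[F (ν + 1)] (ΔW ν)
  w_indep : ∀ ν < N, Indep (MeasurableSpace.comap (ΔW ν) inferInstance) (F ν) μ
  w_law : ∀ ν < N, μ.map (ΔW ν) = gaussianReal 0 (dtTilde a (t (ν + 1) - t ν)).toNNReal
  q_meas : ∀ ν ≤ N, Measurable[F ν] (q ν)
  u_meas : ∀ ν < N, Measurable[F ν] (u ν)
  q_init : ∀ᵐ ω ∂μ, q 0 ω = q0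
  q_step : ∀ ν < N, ∀ᵐ ω ∂μ, q (ν + 1) ω =
      q ν ω + (a * q ν ω + u ν ω) * dtStar a (t (ν + 1) - t ν) + ΔW ν ω
  u_tame : ∀ ν < N, ∀ᵐ ω ∂μ, |u ν ω| ≤ Ct * (|q ν ω| + 1)

noncomputable def zeta1 {Ω : Type*} (t : ℕ → ℝ) (q u : ℕ → Ω → ℝ) (ν : ℕ) (ω : Ω) : ℝ :=
  ∑ μ ∈ Finset.range ν, q μ ω * ((q (μ + 1) ω - q μ ω) - u μ ω * (t (μ + 1) - t μ))

noncomputable def zeta2 {Ω : Type*} (t : ℕ → ℝ) (q : ℕ → Ω → ℝ) (ν : ℕ) (ω : Ω) : ℝ :=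
  ∑ μ ∈ Finset.range ν, (q μ ω) ^ 2 * (t (μ + 1) - t μ)

open scoped NNReal Nat

lemma dtStar_pos (a : ℝ) {δ : ℝ} (hδ : 0 < δ) : 0 < dtStar a δ := by
  unfold dtStar
  split_ifs with ha
  · exact hδ
  rcases lt_or_gt_of_ne ha with ha | ha
  · exact div_pos_of_neg_of_neg (by simpa using mul_neg_of_neg_of_pos ha hδ) ha
  · exact div_pos (by simpa using mul_pos ha hδ) ha

lemma dtStar_le_mul_exp (a : ℝ) {δ : ℝ} (hδ : 0 ≤ δ) : dtStar a δ ≤ δ * exp (|a| * δ) := by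
  unfold dtStar
  split_ifs with ha
  · simp [ha]
  have h1 : 1 ≤ exp (|a| * δ) := one_le_exp (by positivity)
  rcases lt_or_gt_of_ne ha with ha | ha
  · rw [div_le_iff_of_neg ha]
    nlinarith [add_one_le_exp (a * δ), mul_nonneg (mul_nonneg (neg_nonneg.mpr ha.le) hδ)
      (sub_nonneg.mpr h1)]
  · rw [abs_of_pos ha, div_le_iff₀ ha]
    have h2 : exp (a * δ) * exp (-(a * δ)) = 1 := by rw [← exp_add, add_neg_cancel, exp_zero]
    nlinarith [mul_le_mul_of_nonneg_left (add_one_le_exp (-(a * δ))) (exp_pos (a * δ)).le]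

lemma dtTilde_eq_dtStar (a δ : ℝ) : dtTilde a δ = dtStar (2 * a) δ := by
  simp [dtTilde, dtStar]

lemma dtTilde_pos (a : ℝ) {δ : ℝ} (hδ : 0 < δ) : 0 < dtTilde a δ := by
  rw [dtTilde_eq_dtStar]
  exact dtStar_pos _ hδ

lemma dtTilde_le_mul_exp (a : ℝ) {δ : ℝ} (hδ : 0 ≤ δ) :
    dtTilde a δ ≤ δ * exp (2 * |a| * δ) := by
  simpa [dtTilde_eq_dtStar, abs_mul] using dtStar_le_mul_exp (2 * a) hδ

lemma zeta1_succ_sub {Ω : Type*} (t : ℕ → ℝ) (q u : ℕ → Ω → ℝ) (ν : ℕ) (ω : Ω) :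
    zeta1 t q u (ν + 1) ω - zeta1 t q u ν ω =
      q ν ω * ((q (ν + 1) ω - q ν ω) - u ν ω * (t (ν + 1) - t ν)) := by
  simp [zeta1, Finset.sum_range_succ]

lemma zeta2_succ_sub {Ω : Type*} (t : ℕ → ℝ) (q : ℕ → Ω → ℝ) (ν : ℕ) (ω : Ω) :
    zeta2 t q (ν + 1) ω - zeta2 t q ν ω = q ν ω ^ 2 * (t (ν + 1) - t ν) := by
  simp [zeta2, Finset.sum_range_succ]

lemma hasSubgaussianMGF_id_gaussianReal (v : ℝ≥0) : HasSubgaussianMGF id v (gaussianReal 0 v) where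
  integrable_exp_mul := integrable_exp_mul_gaussianReal
  mgf_le t := by simp [mgf_id_gaussianReal]

lemma ProbabilityTheory.HasSubgaussianMGF.measureReal_abs_ge_le {Ω : Type*}
    {mΩ : MeasurableSpace Ω} {μ : Measure Ω} [IsFiniteMeasure μ] {X : Ω → ℝ} {c : ℝ≥0}
    (h : HasSubgaussianMGF X c μ) {ε : ℝ} (hε : 0 ≤ ε) :
    μ.real {ω | ε ≤ |X ω|} ≤ 2 * exp (-ε ^ 2 / (2 * c)) := by
  have hsub : {ω | ε ≤ |X ω|} ⊆ {ω | ε ≤ X ω} ∪ {ω | ε ≤ (-X) ω} := fun ω hω ↦ by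
    simpa [le_abs] using hω
  calc μ.real {ω | ε ≤ |X ω|} ≤ μ.real {ω | ε ≤ X ω} + μ.real {ω | ε ≤ (-X) ω} :=
        (measureReal_mono hsub).trans (measureReal_union_le _ _)
    _ ≤ exp (-ε ^ 2 / (2 * c)) + exp (-ε ^ 2 / (2 * c)) :=
        add_le_add (h.measure_ge_le hε) (h.neg.measure_ge_le hε)
    _ = 2 * exp (-ε ^ 2 / (2 * c)) := by ring

lemma condExp_indicator_le_measureReal_of_subset_union {Ω : Type*}
    {m mD m₀ : MeasurableSpace Ω} {μ : Measure Ω} [IsFiniteMeasure μ]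
    (hm : m ≤ m₀) (hmD : mD ≤ m₀) (hindep : Indep mD m μ) {A B D : Set Ω}
    (hA : MeasurableSet[m₀] A) (hB : MeasurableSet[m] B) (hD : MeasurableSet[mD] D)
    (hABD : ∀ᵐ ω ∂μ, ω ∈ A → ω ∈ B ∨ ω ∈ D) :
    ∀ᵐ ω ∂μ, ω ∉ B → μ[A.indicator (fun _ ↦ (1 : ℝ)) | m] ω ≤ μ.real D := by
  have hint {s : Set Ω} (hs : MeasurableSet[m₀] s) :
      Integrable (s.indicator fun _ ↦ (1 : ℝ)) μ :=
    (integrable_const 1).indicator hs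
  have hle : A.indicator (fun _ ↦ (1 : ℝ)) ≤ᵐ[μ]
      B.indicator (fun _ ↦ 1) + D.indicator (fun _ ↦ 1) := by
    filter_upwards [hABD] with ω hω
    simp only [Pi.add_apply, Set.indicator]
    split_ifs <;> simp_all
  have hB_ce : μ[B.indicator (fun _ ↦ (1 : ℝ)) | m] = B.indicator (fun _ ↦ 1) :=
    condExp_of_stronglyMeasurable hm (stronglyMeasurable_const.indicator hB) (hint (hm B hB))
  have hD_ce : μ[D.indicator (fun _ ↦ (1 : ℝ)) | m] =ᵐ[μ] fun _ ↦ μ.real D := by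
    rw [← integral_indicator_one (hmD D hD)]
    exact condExp_indep_eq hmD hm (stronglyMeasurable_const.indicator hD) hindep
  filter_upwards [condExp_mono (hint hA) ((hint (hm B hB)).add (hint (hmD D hD))) hle,
    condExp_add (hint (hm B hB)) (hint (hmD D hD)) m, hD_ce] with ω hmono hadd hDω hωB
  rwa [hadd, Pi.add_apply, hB_ce, hDω, Set.indicator_of_notMem hωB, zero_add] at hmono

lemma abs_tame_control_le {Ct M Q x u : ℝ} (hCt : Ct ≤ M) (hQ : 1 ≤ Q) (hx : |x| ≤ Q)
    (hu : |u| ≤ Ct * (|x| + 1)) : |u| ≤ 2 * M * Q := by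
  nlinarith [abs_nonneg u, abs_nonneg x,
    mul_le_mul_of_nonneg_right hCt (by positivity : 0 ≤ |x| + 1)]

lemma abs_step_increments_le {a Ct M Q E x u w s δ r : ℝ} (ha : |a| ≤ M) (hCt : Ct ≤ M)
    (hQ : 1 ≤ Q) (hx : |x| ≤ Q) (hu : |u| ≤ Ct * (|x| + 1)) (hE : 1 ≤ E) (hδ : 0 ≤ δ)
    (hs : 0 ≤ s) (hsδ : s ≤ δ * E) (hw : |w| ≤ r) :
    |(a * x + u) * s + w| + |x * ((a * x + u) * s + w - u * δ)| + |x ^ 2 * δ| ≤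
      9 * (M + 1) * E * (Q ^ 2 * δ) + 2 * Q * r := by
  have hM : 0 ≤ M := (abs_nonneg a).trans ha
  have hu' : |u| ≤ 2 * M * Q := abs_tame_control_le hCt hQ hx hu
  have hax : |a * x| ≤ M * Q := by rw [abs_mul]; exact mul_le_mul ha hx (abs_nonneg x) hM
  have hdq : |(a * x + u) * s + w| ≤ 3 * M * Q * (δ * E) + r :=
    calc |(a * x + u) * s + w| ≤ (|a * x| + |u|) * s + |w| := by
          grw [abs_add_le, abs_mul, abs_of_nonneg hs, abs_add_le]
      _ ≤ 3 * M * Q * (δ * E) + r := by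
          have hMQ : 0 ≤ 3 * M * Q := by positivity
          nlinarith [mul_le_mul_of_nonneg_right (add_le_add hax hu') hs,
            mul_le_mul_of_nonneg_left hsδ hMQ]
  have hdz1 : |x * ((a * x + u) * s + w - u * δ)| ≤
      Q * (3 * M * Q * (δ * E) + r + 2 * M * Q * δ) := by
    rw [abs_mul]
    gcongr
    grw [abs_sub, hdq, abs_mul, abs_of_nonneg hδ, hu']
  have hdz2 : |x ^ 2 * δ| ≤ Q ^ 2 * δ := by
    rw [abs_mul, abs_pow, abs_of_nonneg hδ]
    gcongr
  have hQδE : 0 ≤ Q * (δ * E) := by positivity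
  nlinarith [mul_le_mul_of_nonneg_left hQ (mul_nonneg hM hQδE),
    mul_le_mul_of_nonneg_left hQ ((abs_nonneg w).trans hw),
    mul_le_mul_of_nonneg_left hE (mul_nonneg hM (by positivity : 0 ≤ Q ^ 2 * δ)),
    mul_le_mul_of_nonneg_left hE (by positivity : 0 ≤ Q ^ 2 * δ)]

/-- Working with `θ = δ ^ (1 / 1000)` turns the real powers of the statement into natural ones. -/
lemma exists_thousandth_root {δ Q : ℝ} (hδ : 0 < δ) (hQ : Q ≤ δ ^ (-(1 : ℝ) / 1000)) :
    ∃ θ > 0, δ = θ ^ 1000 ∧ δ ^ ((2 : ℝ) / 5) = θ ^ 400 ∧ Q * θ ≤ 1 := by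
  have hpow (n : ℕ) : (δ ^ ((1 : ℝ) / 1000)) ^ n = δ ^ ((n : ℝ) / 1000) := by
    rw [← rpow_natCast, ← rpow_mul hδ.le, one_div_mul_eq_div]
  refine ⟨δ ^ ((1 : ℝ) / 1000), rpow_pos_of_pos hδ _, ?_, ?_, ?_⟩
  · rw [hpow]; norm_num
  · rw [hpow]; norm_num
  · rwa [neg_div, rpow_neg hδ.le, ← one_div, le_div_iff₀ (rpow_pos_of_pos hδ _)] at hQ

lemma mul_sq_mul_pow_add_le_pow {K Q θ : ℝ} (hKQ : 2 * K ≤ Q) (hθ : 0 ≤ θ) (hQ : 1 ≤ Q)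
    (hQθ : Q * θ ≤ 1) :
    K * (Q ^ 2 * θ ^ 1000) + 2 * Q * (θ ^ 400 / (4 * Q)) ≤ θ ^ 400 := by
  have hθ1 : θ ≤ 1 := le_trans (le_mul_of_one_le_left hθ hQ) hQθ
  have hdrift : 2 * K * (Q ^ 2 * θ ^ 1000) ≤ θ ^ 400 :=
    calc 2 * K * (Q ^ 2 * θ ^ 1000) ≤ Q * (Q ^ 2 * θ ^ 1000) := by gcongr
      _ = (Q * θ) ^ 3 * θ ^ 997 := by ring
      _ ≤ 1 * θ ^ 400 :=
          mul_le_mul (pow_le_one₀ (by positivity) hQθ) (pow_le_pow_of_le_one hθ hθ1 (by norm_num))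
            (by positivity) zero_le_one
      _ = θ ^ 400 := one_mul _
  have hnoise : 2 * Q * (θ ^ 400 / (4 * Q)) = θ ^ 400 / 2 := by field_simp; ring
  linarith

lemma exp_neg_inv_le_factorial_mul_pow (n : ℕ) {y : ℝ} (hy : 0 < y) :
    exp (-y⁻¹) ≤ n ! * y ^ n := by
  have h := Real.pow_div_factorial_le_exp y⁻¹ (inv_pos.2 hy).le n
  rw [exp_neg, ← inv_inv (n ! * y ^ n)]
  refine inv_anti₀ (by positivity) (le_trans (le_of_eq ?_) h)
  rw [mul_inv, inv_pow, div_eq_mul_inv, mul_comm]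

lemma two_mul_exp_neg_sq_div_le {θ Q v E : ℝ} (hθ : 0 < θ) (hQ : 1 ≤ Q) (hQθ : Q * θ ≤ 1)
    (hv : 0 < v) (hvE : v ≤ θ ^ 1000 * E) :
    2 * exp (-((θ ^ 400 / (4 * Q)) ^ 2 / (2 * v))) ≤
      2 * 5051 ! * (32 * E) ^ 5051 * (θ ^ 1000) ^ 1000 := by
  have hE : 0 < E := pos_of_mul_pos_right (hv.trans_le hvE) (by positivity)
  have hθ1 : θ ≤ 1 := le_trans (le_mul_of_one_le_left hθ.le hQ) hQθ
  have hexponent : (32 * E * θ ^ 198)⁻¹ ≤ (θ ^ 400 / (4 * Q)) ^ 2 / (2 * v) := by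
    rw [le_div_iff₀ (by positivity), div_pow, le_div_iff₀ (by positivity)]
    calc (32 * E * θ ^ 198)⁻¹ * (2 * v) * (4 * Q) ^ 2
        ≤ (32 * E * θ ^ 198)⁻¹ * (2 * (θ ^ 1000 * E)) * (4 * (1 / θ)) ^ 2 := by
          gcongr
          exact (le_div_iff₀ hθ).2 hQθ
      _ = (θ ^ 400) ^ 2 := by field_simp; ring
  -- `5051` is the least `n` with `198 * n ≥ 10 ^ 6`.
  calc 2 * exp (-((θ ^ 400 / (4 * Q)) ^ 2 / (2 * v)))
      ≤ 2 * exp (-(32 * E * θ ^ 198)⁻¹) := by gcongr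
    _ ≤ 2 * (5051 ! * (32 * E * θ ^ 198) ^ 5051) := by
        gcongr
        exact exp_neg_inv_le_factorial_mul_pow _ (by positivity)
    _ = 2 * 5051 ! * (32 * E) ^ 5051 * θ ^ (198 * 5051) := by
        rw [mul_pow, ← pow_mul]; simp only [mul_assoc]
    _ ≤ 2 * 5051 ! * (32 * E) ^ 5051 * (θ ^ 1000) ^ 1000 := by
        rw [← pow_mul]
        exact mul_le_mul_of_nonneg_left (pow_le_pow_of_le_one hθ.le hθ1 (by norm_num))
          (by positivity)

namespace TameProcess

variable {Ω : Type*} {mΩ : MeasurableSpace Ω} {μ : Measure Ω} {N : ℕ} {t : ℕ → ℝ}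
  {a q0 Ct : ℝ} {F : Filtration ℕ mΩ} {q u ΔW : ℕ → Ω → ℝ}

lemma measurableSet_increments_gt (tp : TameProcess μ N t a q0 Ct F q u ΔW) {ν : ℕ}
    (hν : ν < N) (s : ℝ) :
    MeasurableSet {ω | s < |q (ν + 1) ω - q ν ω| + |zeta1 t q u (ν + 1) ω - zeta1 t q u ν ω| +
      |zeta2 t q (ν + 1) ω - zeta2 t q ν ω|} := by
  have hq : Measurable (q ν) := (tp.q_meas ν hν.le).mono (F.le ν) le_rfl
  have hq' : Measurable (q (ν + 1)) := (tp.q_meas (ν + 1) hν).mono (F.le (ν + 1)) le_rfl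
  have hu : Measurable (u ν) := (tp.u_meas ν hν).mono (F.le ν) le_rfl
  refine measurableSet_lt measurable_const ?_
  simp_rw [zeta1_succ_sub, zeta2_succ_sub]
  fun_prop

lemma abs_increments_le (tp : TameProcess μ N t a q0 Ct F q u ΔW) {ν : ℕ} (hν : ν < N)
    {M Q r : ℝ} (ha : |a| ≤ M) (hCt : Ct ≤ M) (hQ : 1 ≤ Q) (hδ : 0 < t (ν + 1) - t ν)
    (hδ1 : t (ν + 1) - t ν ≤ 1) :
    ∀ᵐ ω ∂μ, |q ν ω| ≤ Q → |ΔW ν ω| ≤ r →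
      |q (ν + 1) ω - q ν ω| + |zeta1 t q u (ν + 1) ω - zeta1 t q u ν ω| +
        |zeta2 t q (ν + 1) ω - zeta2 t q ν ω| ≤
      9 * (M + 1) * exp M * (Q ^ 2 * (t (ν + 1) - t ν)) + 2 * Q * r := by
  have hs : dtStar a (t (ν + 1) - t ν) ≤ (t (ν + 1) - t ν) * exp M := by
    refine (dtStar_le_mul_exp a hδ.le).trans (mul_le_mul_of_nonneg_left ?_ hδ.le)
    exact exp_le_exp.2 ((mul_le_mul ha hδ1 hδ.le ((abs_nonneg a).trans ha)).trans_eq (mul_one M))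
  filter_upwards [tp.q_step ν hν, tp.u_tame ν hν] with ω hstep htame hq hw
  rw [zeta1_succ_sub, zeta2_succ_sub, hstep, add_assoc (q ν ω), add_sub_cancel_left]
  exact abs_step_increments_le ha hCt hQ hq htame (one_le_exp ((abs_nonneg a).trans ha)) hδ.le
    (dtStar_pos a hδ).le hs hw

lemma abs_increments_le_pow (tp : TameProcess μ N t a q0 Ct F q u ΔW) {ν : ℕ} (hν : ν < N)
    {M Q θ : ℝ} (ha : |a| ≤ M) (hCt : Ct ≤ M) (hQ : 1 ≤ Q) (hMQ : 2 * (9 * (M + 1) * exp M) ≤ Q)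
    (hθ : 0 < θ) (hQθ : Q * θ ≤ 1) (hδθ : t (ν + 1) - t ν = θ ^ 1000) :
    ∀ᵐ ω ∂μ, |q ν ω| ≤ Q → |ΔW ν ω| ≤ θ ^ 400 / (4 * Q) →
      |q (ν + 1) ω - q ν ω| + |zeta1 t q u (ν + 1) ω - zeta1 t q u ν ω| +
        |zeta2 t q (ν + 1) ω - zeta2 t q ν ω| ≤ θ ^ 400 := by
  have hθ1 : θ ≤ 1 := le_trans (le_mul_of_one_le_left hθ.le hQ) hQθ
  have hδ : 0 < t (ν + 1) - t ν := hδθ ▸ pow_pos hθ _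
  have hδ1 : t (ν + 1) - t ν ≤ 1 := hδθ ▸ pow_le_one₀ hθ.le hθ1
  have hbound := mul_sq_mul_pow_add_le_pow hMQ hθ.le hQ hQθ
  rw [← hδθ] at hbound
  filter_upwards [tp.abs_increments_le hν ha hCt hQ hδ hδ1] with ω hω hq hw
  exact (hω hq hw).trans hbound

lemma measureReal_abs_noise_ge_le [IsFiniteMeasure μ] (tp : TameProcess μ N t a q0 Ct F q u ΔW)
    {ν : ℕ} (hν : ν < N) (hδ : 0 < t (ν + 1) - t ν) {r : ℝ} (hr : 0 ≤ r) :
    μ.real {ω | r ≤ |ΔW ν ω|} ≤ 2 * exp (-(r ^ 2 / (2 * dtTilde a (t (ν + 1) - t ν)))) := by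
  have hW : Measurable (ΔW ν) := (tp.w_meas ν hν).mono (F.le (ν + 1)) le_rfl
  have hsg : HasSubgaussianMGF (ΔW ν) (dtTilde a (t (ν + 1) - t ν)).toNNReal μ := by
    rw [← HasSubgaussianMGF.id_map_iff hW.aemeasurable, tp.w_law ν hν]
    exact hasSubgaussianMGF_id_gaussianReal _
  simpa [neg_div, Real.coe_toNNReal _ (dtTilde_pos a hδ).le] using hsg.measureReal_abs_ge_le hr

lemma measureReal_abs_noise_ge_le_pow [IsFiniteMeasure μ]
    (tp : TameProcess μ N t a q0 Ct F q u ΔW) {ν : ℕ} (hν : ν < N) {M Q θ : ℝ} (ha : |a| ≤ M)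
    (hQ : 1 ≤ Q) (hθ : 0 < θ) (hQθ : Q * θ ≤ 1) (hδθ : t (ν + 1) - t ν = θ ^ 1000) :
    μ.real {ω | θ ^ 400 / (4 * Q) ≤ |ΔW ν ω|} ≤
      2 * 5051 ! * (32 * exp (2 * M)) ^ 5051 * (t (ν + 1) - t ν) ^ 1000 := by
  have hθ1 : θ ≤ 1 := le_trans (le_mul_of_one_le_left hθ.le hQ) hQθ
  have hδ : 0 < t (ν + 1) - t ν := hδθ ▸ pow_pos hθ _
  have hδ1 : t (ν + 1) - t ν ≤ 1 := hδθ ▸ pow_le_one₀ hθ.le hθ1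
  have hv : dtTilde a (t (ν + 1) - t ν) ≤ θ ^ 1000 * exp (2 * M) := by
    refine hδθ ▸ (dtTilde_le_mul_exp a hδ.le).trans (mul_le_mul_of_nonneg_left ?_ hδ.le)
    have : 2 * |a| * (t (ν + 1) - t ν) ≤ 2 * |a| := mul_le_of_le_one_right (by positivity) hδ1
    exact exp_le_exp.2 (by linarith)
  have htail := two_mul_exp_neg_sq_div_le hθ hQ hQθ (dtTilde_pos a hδ) hv
  rw [← hδθ] at htail
  exact (tp.measureReal_abs_noise_ge_le hν hδ (by positivity)).trans htail

end TameProcess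

/-- conditional probability bound for large increments
`|Δq_ν| + |Δζ_{1,ν}| + |Δζ_{2,ν}| > (Δt_ν)^{2/5}` of a tame discrete controlled process. -/
theorem statement4 (Bq0 Ba Ct BT : ℝ) :
    ∃ c > (0 : ℝ), ∃ C > (0 : ℝ),
      ∀ (Ω : Type) (mΩ : MeasurableSpace Ω) (μ : Measure Ω), IsProbabilityMeasure μ →
      ∀ (N : ℕ), 1 ≤ N →
      ∀ (T : ℝ) (t : ℕ → ℝ), IsPartition N T t → T ≤ BT →
      ∀ (a q0 : ℝ), |a| ≤ Ba → |q0| ≤ Bq0 →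
      ∀ (F : Filtration ℕ mΩ) (q u ΔW : ℕ → Ω → ℝ),
        TameProcess μ N t a q0 Ct F q u ΔW →
        ∀ ν < N, ∀ Q : ℝ, C ≤ Q → Q ≤ (t (ν + 1) - t ν) ^ (-(1 : ℝ) / 1000) →
          ∀ᵐ ω ∂μ, |q ν ω| ≤ Q →
            (μ[Set.indicator
                {ω' | (t (ν + 1) - t ν) ^ ((2 : ℝ) / 5) <
                    |q (ν + 1) ω' - q ν ω'| +
                      |zeta1 t q u (ν + 1) ω' - zeta1 t q u ν ω'| +
                      |zeta2 t q (ν + 1) ω' - zeta2 t q ν ω'|}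
                (fun _ => (1 : ℝ)) | F ν]) ω
              ≤ C * (t (ν + 1) - t ν) ^ (1000 : ℕ) := by
  set M := |Ba| + |Ct|
  set K := 9 * (M + 1) * exp M
  set L := 2 * 5051 ! * (32 * exp (2 * M)) ^ 5051
  have hL : 0 ≤ L := by positivity
  refine ⟨1, one_pos, 2 * K + L + 1, by positivity, ?_⟩
  intro Ω mΩ μ _ N _ T t ht _ a q0 ha _ F q u ΔW tp ν hν Q hCQ hQδ
  obtain ⟨θ, hθ, hδθ, hδ25, hQθ⟩ := exists_thousandth_root (sub_pos.2 (ht.2.2 ν hν)) hQδ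
  have hKQ : 2 * K ≤ Q :=
    (le_add_of_nonneg_right hL).trans ((le_add_of_nonneg_right zero_le_one).trans hCQ)
  have hQ : 1 ≤ Q := (le_add_of_nonneg_left (by positivity)).trans hCQ
  have haM : |a| ≤ M := ha.trans ((le_abs_self Ba).trans (le_add_of_nonneg_right (abs_nonneg _)))
  have hCtM : Ct ≤ M := (le_abs_self Ct).trans (le_add_of_nonneg_left (abs_nonneg _))
  have hsmall := tp.abs_increments_le_pow hν haM hCtM hQ hKQ hθ hQθ hδθ
  have htail : μ.real {ω | θ ^ 400 / (4 * Q) ≤ |ΔW ν ω|} ≤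
      (2 * K + L + 1) * (t (ν + 1) - t ν) ^ 1000 :=
    (tp.measureReal_abs_noise_ge_le_pow hν haM hQ hθ hQθ hδθ).trans
      (mul_le_mul_of_nonneg_right ((le_add_of_nonneg_left (by positivity)).trans
        (le_add_of_nonneg_right zero_le_one)) (pow_nonneg (by rw [hδθ]; positivity) _))
  refine (condExp_indicator_le_measureReal_of_subset_union (F.le ν)
    ((tp.w_meas ν hν).mono (F.le (ν + 1)) le_rfl).comap_le (tp.w_indep ν hν)
    (tp.measurableSet_increments_gt hν _)
    (tp.q_meas ν hν.le (measurableSet_lt measurable_const continuous_abs.measurable))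
    ⟨_, measurableSet_le measurable_const continuous_abs.measurable, rfl⟩ ?_).mono
    fun ω hω hqω ↦ (hω (not_lt.2 hqω)).trans htail
  filter_upwards [hsmall] with ω hω hωA
  by_contra! hBD
  rw [hδ25] at hωA
  exact (hωA.trans_le (hω (not_lt.1 hBD.1) (not_le.1 hBD.2).le)).false
end

section
/- There exist constants c > 0 and C > 0, depending only on upper bounds for |a| and T, such that if Δt_MAX < c then for every Q ≥ C one has Prob[ max_{0 ≤ ν ≤ N} | Σ_{0≤μ<ν} ( (ΔW_μ)² − Δt~_μ(a) ) | > C·Q²·(Δt_MAX)^{1/2} ] ≤ exp(−c·Q²). -/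
/-!
For `r ≤ 1 / (4 σ)` an `N(0, σ)` variable `X` has `E exp (r (X² - σ)) = e^{-rσ} (1 - 2rσ)^{-1/2}`,
which lies between `1` and `exp ((2rσ)²)`. Hence, for independent increments, `exp (r S_n)` with
`S_n = ∑_{k<n} (ΔW_k² - σ_k)` is a nonnegative submartingale, and Doob's maximal inequality gives
`P (max_{n ≤ N} r S_n ≥ x) ≤ exp (∑ (2rσ_k)² - x)`. With `r = ±1 / (4 K √Δt_MAX)`, where
`σ_k ≤ K Δt_k`, the sum `∑ (2rσ_k)²` is at most `T / 4`, while the threshold `C Q² √Δt_MAX`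
becomes `x = C Q² / (4 K)`.
-/

open MeasureTheory ProbabilityTheory Real

open Finset
open scoped NNReal

lemma one_le_exp_neg_half_mul_inv_sqrt {u : ℝ} (hu : u < 1) :
    1 ≤ exp (-(u / 2)) * (√(1 - u))⁻¹ := by
  rw [← div_eq_mul_inv, one_le_div (sqrt_pos.2 (by linarith)), ← neg_div, exp_half]
  exact sqrt_le_sqrt (by linarith [add_one_le_exp (-u)])

lemma exp_neg_half_mul_inv_sqrt_le {u : ℝ} (hu : u ≤ 1 / 2) :
    exp (-(u / 2)) * (√(1 - u))⁻¹ ≤ exp (u ^ 2) := by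
  have h1u : 0 < 1 - u := by linarith
  -- `(1 - u) * (1 + u + 2 * u ^ 2) = 1 + u ^ 2 * (1 - 2 * u) ≥ 1`
  have key : 1 ≤ (1 - u) * exp (u + 2 * u ^ 2) := by
    nlinarith [mul_le_mul_of_nonneg_left (add_one_le_exp (u + 2 * u ^ 2)) h1u.le]
  have key' : exp (-u) ≤ exp (2 * u ^ 2) * (1 - u) := by
    calc exp (-u) ≤ exp (-u) * ((1 - u) * exp (u + 2 * u ^ 2)) :=
          le_mul_of_one_le_right (exp_pos _).le key
      _ = exp (2 * u ^ 2) * (1 - u) := by rw [mul_left_comm, ← exp_add]; ring_nf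
  rw [← div_eq_mul_inv, ← neg_div, exp_half, show u ^ 2 = 2 * u ^ 2 / 2 by ring, exp_half,
    ← sqrt_div' _ h1u.le]
  exact sqrt_le_sqrt ((div_le_iff₀ h1u).2 key')

lemma gaussianPDFReal_zero_mul_exp_mul_sq {v : ℝ≥0} (hv : v ≠ 0) (r x : ℝ) :
    gaussianPDFReal 0 v x * exp (r * x ^ 2)
      = (√(2 * π * v))⁻¹ * exp (-((1 - 2 * r * v) / (2 * v)) * x ^ 2) := by
  have hv0 : (0 : ℝ) < v := by positivity
  simp only [gaussianPDFReal_def, sub_zero, mul_assoc, ← exp_add]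
  congr 2
  field_simp
  ring

lemma integrable_exp_mul_sq_gaussianReal {v : ℝ≥0} (hv : v ≠ 0) {r : ℝ} (hr : 2 * r * v < 1) :
    Integrable (fun x ↦ exp (r * x ^ 2)) (gaussianReal 0 v) := by
  have hv0 : (0 : ℝ) < v := by positivity
  rw [gaussianReal_of_var_ne_zero 0 hv, gaussianPDF_def,
    integrable_withDensity_iff_integrable_smul' (by fun_prop)
      (ae_of_all _ fun _ ↦ ENNReal.ofReal_lt_top)]
  simp_rw [ENNReal.toReal_ofReal (gaussianPDFReal_nonneg 0 v _), smul_eq_mul,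
    gaussianPDFReal_zero_mul_exp_mul_sq hv]
  exact (integrable_exp_neg_mul_sq (div_pos (by linarith) (by linarith))).const_mul _

lemma integral_exp_mul_sq_gaussianReal {v : ℝ≥0} (hv : v ≠ 0) {r : ℝ} (hr : 2 * r * v < 1) :
    ∫ x, exp (r * x ^ 2) ∂(gaussianReal 0 v) = (√(1 - 2 * r * v))⁻¹ := by
  have hv0 : (0 : ℝ) < v := by positivity
  have hr' : 0 < 1 - 2 * r * v := by linarith
  simp_rw [integral_gaussianReal_eq_integral_smul hv, smul_eq_mul,
    gaussianPDFReal_zero_mul_exp_mul_sq hv, integral_const_mul, integral_gaussian]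
  rw [← sqrt_inv, ← sqrt_mul (by positivity), ← sqrt_inv]
  congr 1
  field_simp

lemma exp_mul_sq_sub_eq (r v x : ℝ) :
    exp (r * (x ^ 2 - v)) = exp (-(r * v)) * exp (r * x ^ 2) := by
  rw [← exp_add]; ring_nf

section GaussianSquare

variable {Ω : Type*} {mΩ : MeasurableSpace Ω} {μ : Measure Ω} {X : Ω → ℝ} {v r : ℝ}

lemma integrable_exp_mul_sq_sub (hv : 0 < v) (hX : μ.map X = gaussianReal 0 v.toNNReal)
    (hr : 2 * r * v < 1) : Integrable (fun ω ↦ exp (r * (X ω ^ 2 - v))) μ := by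
  have hXm : AEMeasurable X μ := .of_map_ne_zero (hX ▸ IsProbabilityMeasure.ne_zero _)
  refine (integrable_map_measure (g := fun x ↦ exp (r * (x ^ 2 - v))) (by fun_prop) hXm).1 ?_
  simp_rw [hX, exp_mul_sq_sub_eq r v]
  refine (integrable_exp_mul_sq_gaussianReal (by simpa using hv) ?_).const_mul _
  rwa [coe_toNNReal _ hv.le]

lemma integral_exp_mul_sq_sub (hv : 0 < v) (hX : μ.map X = gaussianReal 0 v.toNNReal)
    (hr : 2 * r * v < 1) :
    ∫ ω, exp (r * (X ω ^ 2 - v)) ∂μ = exp (-(2 * r * v / 2)) * (√(1 - 2 * r * v))⁻¹ := by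
  have hXm : AEMeasurable X μ := .of_map_ne_zero (hX ▸ IsProbabilityMeasure.ne_zero _)
  rw [← integral_map (f := fun x ↦ exp (r * (x ^ 2 - v))) hXm (by fun_prop), hX]
  simp_rw [exp_mul_sq_sub_eq r v, integral_const_mul]
  rw [integral_exp_mul_sq_gaussianReal (by simpa using hv) (by rwa [coe_toNNReal _ hv.le]),
    coe_toNNReal _ hv.le]
  ring_nf

end GaussianSquare

lemma exp_sum_range_succ_eq_mul {Ω : Type*} (Y : ℕ → Ω → ℝ) (n : ℕ) :
    (fun ω ↦ exp (∑ k ∈ range (n + 1), Y k ω))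
      = (fun ω ↦ exp (∑ k ∈ range n, Y k ω)) * fun ω ↦ exp (Y n ω) := by
  ext ω; simp [sum_range_succ, exp_add]

section ExpSum

variable {Ω : Type*} {mΩ : MeasurableSpace Ω} {μ : Measure Ω}
  {F : Filtration ℕ mΩ} {Y : ℕ → Ω → ℝ}

lemma stronglyMeasurable_exp_sum (hY : ∀ k, Measurable[F (k + 1)] (Y k)) (n : ℕ) :
    StronglyMeasurable[F n] (fun ω ↦ exp (∑ k ∈ range n, Y k ω)) := by
  refine (measurable_exp.comp (Finset.measurable_sum _ fun k hk ↦ ?_)).stronglyMeasurable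
  exact (hY k).mono (F.mono (mem_range.1 hk)) le_rfl

lemma indepFun_exp_sum_exp (hY : ∀ k, Measurable[F (k + 1)] (Y k))
    (hindep : ∀ k, Indep (MeasurableSpace.comap (Y k) inferInstance) (F k) μ) (n : ℕ) :
    IndepFun (fun ω ↦ exp (∑ k ∈ range n, Y k ω)) (fun ω ↦ exp (Y n ω)) μ := by
  rw [IndepFun_iff_Indep]
  refine indep_of_indep_of_le_right (indep_of_indep_of_le_left (hindep n).symm
    (stronglyMeasurable_exp_sum hY n).measurable.comap_le) ?_
  exact (measurable_exp.comp (comap_measurable (Y n))).comap_le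

lemma integrable_exp_sum_and_integral_eq_prod [IsProbabilityMeasure μ]
    (hY : ∀ k, Measurable[F (k + 1)] (Y k))
    (hindep : ∀ k, Indep (MeasurableSpace.comap (Y k) inferInstance) (F k) μ)
    (hint : ∀ k, Integrable (fun ω ↦ exp (Y k ω)) μ) (n : ℕ) :
    Integrable (fun ω ↦ exp (∑ k ∈ range n, Y k ω)) μ ∧
      ∫ ω, exp (∑ k ∈ range n, Y k ω) ∂μ = ∏ k ∈ range n, ∫ ω, exp (Y k ω) ∂μ := by
  induction n with
  | zero => simp
  | succ n ih =>
    have hind := indepFun_exp_sum_exp hY hindep n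
    rw [exp_sum_range_succ_eq_mul, prod_range_succ, ← ih.2]
    exact ⟨hind.integrable_mul ih.1 (hint n),
      hind.integral_mul_eq_mul_integral ih.1.aestronglyMeasurable (hint n).aestronglyMeasurable⟩

lemma submartingale_exp_sum [IsProbabilityMeasure μ] (hY : ∀ k, Measurable[F (k + 1)] (Y k))
    (hindep : ∀ k, Indep (MeasurableSpace.comap (Y k) inferInstance) (F k) μ)
    (hint : ∀ k, Integrable (fun ω ↦ exp (Y k ω)) μ)
    (hone : ∀ k, 1 ≤ ∫ ω, exp (Y k ω) ∂μ) :
    Submartingale (fun n ω ↦ exp (∑ k ∈ range n, Y k ω)) F μ := by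
  have hint_sum n := (integrable_exp_sum_and_integral_eq_prod hY hindep hint n).1
  refine submartingale_nat (stronglyMeasurable_exp_sum hY) hint_sum fun n ↦ ?_
  have hpull : μ[fun ω ↦ exp (∑ k ∈ range (n + 1), Y k ω) | F n]
      =ᵐ[μ] (fun ω ↦ exp (∑ k ∈ range n, Y k ω)) * μ[fun ω ↦ exp (Y n ω) | F n] := by
    rw [exp_sum_range_succ_eq_mul]
    exact condExp_mul_of_stronglyMeasurable_left (stronglyMeasurable_exp_sum hY n)
      (exp_sum_range_succ_eq_mul Y n ▸ hint_sum (n + 1)) (hint n)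
  have hindep_cond : μ[fun ω ↦ exp (Y n ω) | F n] =ᵐ[μ] fun _ ↦ ∫ ω, exp (Y n ω) ∂μ :=
    condExp_indep_eq ((hY n).mono (F.le _) le_rfl).comap_le (F.le n)
      (measurable_exp.comp (comap_measurable (Y n))).stronglyMeasurable (hindep n)
  filter_upwards [hpull, hindep_cond] with ω h₁ h₂
  rw [h₁, Pi.mul_apply, h₂]
  exact le_mul_of_one_le_right (exp_pos _).le (hone n)

lemma measure_exists_le_sum_le [IsProbabilityMeasure μ] (hY : ∀ k, Measurable[F (k + 1)] (Y k))
    (hindep : ∀ k, Indep (MeasurableSpace.comap (Y k) inferInstance) (F k) μ)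
    (hint : ∀ k, Integrable (fun ω ↦ exp (Y k ω)) μ)
    (hone : ∀ k, 1 ≤ ∫ ω, exp (Y k ω) ∂μ) (N : ℕ) (x : ℝ) :
    μ {ω | ∃ n ≤ N, x ≤ ∑ k ∈ range n, Y k ω}
      ≤ ENNReal.ofReal (exp (-x) * ∏ k ∈ range N, ∫ ω, exp (Y k ω) ∂μ) := by
  obtain ⟨hint_N, hintegral_N⟩ := integrable_exp_sum_and_integral_eq_prod hY hindep hint N
  have hdoob := maximal_ineq (submartingale_exp_sum hY hindep hint hone)
    (fun n ω ↦ (exp_pos _).le) (ε := (exp x).toNNReal) N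
  rw [coe_toNNReal _ (exp_pos x).le] at hdoob
  set D := {ω | exp x ≤ (range (N + 1)).sup' nonempty_range_add_one
    fun n ↦ exp (∑ k ∈ range n, Y k ω)}
  have hsubset : {ω | ∃ n ≤ N, x ≤ ∑ k ∈ range n, Y k ω} ⊆ D := by
    rintro ω ⟨n, hn, hx⟩
    exact (exp_le_exp.2 hx).trans (le_sup' (fun n ↦ exp (∑ k ∈ range n, Y k ω))
      (mem_range.2 (Nat.lt_succ_of_le hn)))
  have hD : ENNReal.ofReal (exp x) * μ D
      ≤ ENNReal.ofReal (∏ k ∈ range N, ∫ ω, exp (Y k ω) ∂μ) := by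
    refine hdoob.trans (ENNReal.ofReal_le_ofReal ?_)
    rw [← hintegral_N]
    exact setIntegral_le_integral hint_N (ae_of_all _ fun ω ↦ (exp_pos _).le)
  refine (measure_mono hsubset).trans ?_
  rw [exp_neg, inv_mul_eq_div, ENNReal.ofReal_div_of_pos (exp_pos x),
    ENNReal.le_div_iff_mul_le (Or.inl (by simp [exp_pos])) (Or.inl ENNReal.ofReal_ne_top),
    mul_comm]
  exact hD

lemma measure_exists_le_sum_le_of_lt [IsProbabilityMeasure μ] {N : ℕ}
    (hY : ∀ k < N, Measurable[F (k + 1)] (Y k))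
    (hindep : ∀ k < N, Indep (MeasurableSpace.comap (Y k) inferInstance) (F k) μ)
    (hint : ∀ k < N, Integrable (fun ω ↦ exp (Y k ω)) μ)
    (hone : ∀ k < N, 1 ≤ ∫ ω, exp (Y k ω) ∂μ) (x : ℝ) :
    μ {ω | ∃ n ≤ N, x ≤ ∑ k ∈ range n, Y k ω}
      ≤ ENNReal.ofReal (exp (-x) * ∏ k ∈ range N, ∫ ω, exp (Y k ω) ∂μ) := by
  -- increments beyond the horizon `N` are replaced by `0`, which changes neither side
  set Y' : ℕ → Ω → ℝ := fun k ↦ if k < N then Y k else 0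
  have hY'_lt {k} (hk : k < N) : Y' k = Y k := if_pos hk
  have hY'_ge {k} (hk : ¬k < N) : Y' k = 0 := if_neg hk
  have hbound := measure_exists_le_sum_le (F := F) (Y := Y') (μ := μ)
    (fun k ↦ by
      by_cases hk : k < N
      · exact hY'_lt hk ▸ hY k hk
      · exact hY'_ge hk ▸ measurable_const)
    (fun k ↦ by
      by_cases hk : k < N
      · exact hY'_lt hk ▸ hindep k hk
      · rw [hY'_ge hk, Pi.zero_def, MeasurableSpace.comap_const]; exact indep_bot_left _)
    (fun k ↦ by
      by_cases hk : k < N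
      · exact hY'_lt hk ▸ hint k hk
      · simp [hY'_ge hk])
    (fun k ↦ by
      by_cases hk : k < N
      · exact hY'_lt hk ▸ hone k hk
      · simp [hY'_ge hk]) N x
  have hsum {n} (hn : n ≤ N) (ω : Ω) : ∑ k ∈ range n, Y' k ω = ∑ k ∈ range n, Y k ω :=
    sum_congr rfl fun k hk ↦ by rw [hY'_lt ((mem_range.1 hk).trans_le hn)]
  have hprod : ∏ k ∈ range N, ∫ ω, exp (Y' k ω) ∂μ = ∏ k ∈ range N, ∫ ω, exp (Y k ω) ∂μ :=
    prod_congr rfl fun k hk ↦ by rw [hY'_lt (mem_range.1 hk)]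
  rw [← hprod]
  refine le_trans (le_of_eq (congr_arg μ ?_)) hbound
  ext ω
  exact exists_congr fun n ↦ and_congr_right fun hn ↦ by rw [hsum hn]

end ExpSum

section SumOfSquaredIncrements

variable {Ω : Type*} {mΩ : MeasurableSpace Ω} {μ : Measure Ω} [IsProbabilityMeasure μ]
  {F : Filtration ℕ mΩ} {ΔW : ℕ → Ω → ℝ} {σ : ℕ → ℝ} {N : ℕ}

lemma measure_exists_le_mul_sum_sq_sub_le
    (hmeas : ∀ k < N, Measurable[F (k + 1)] (ΔW k))
    (hindep : ∀ k < N, Indep (MeasurableSpace.comap (ΔW k) inferInstance) (F k) μ)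
    (hmap : ∀ k < N, μ.map (ΔW k) = gaussianReal 0 (σ k).toNNReal)
    (hσ : ∀ k < N, 0 < σ k) {r : ℝ} (hr : ∀ k < N, 2 * r * σ k ≤ 1 / 2) (x : ℝ) :
    μ {ω | ∃ n ≤ N, x ≤ r * ∑ k ∈ range n, (ΔW k ω ^ 2 - σ k)}
      ≤ ENNReal.ofReal (exp (∑ k ∈ range N, (2 * r * σ k) ^ 2 - x)) := by
  have hr_lt {k} (hk : k < N) : 2 * r * σ k < 1 := by linarith [hr k hk]
  have hbound := measure_exists_le_sum_le_of_lt (F := F) (Y := fun k ω ↦ r * (ΔW k ω ^ 2 - σ k))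
    (fun k hk ↦ (((hmeas k hk).pow_const 2).sub_const _).const_mul r)
    (fun k hk ↦ indep_of_indep_of_le_left (hindep k hk)
      (((comap_measurable (ΔW k)).pow_const 2).sub_const _ |>.const_mul r).comap_le)
    (fun k hk ↦ integrable_exp_mul_sq_sub (hσ k hk) (hmap k hk) (hr_lt hk))
    (fun k hk ↦ by
      rw [integral_exp_mul_sq_sub (hσ k hk) (hmap k hk) (hr_lt hk)]
      exact one_le_exp_neg_half_mul_inv_sqrt (hr_lt hk)) x
  simp_rw [← mul_sum] at hbound
  refine hbound.trans (ENNReal.ofReal_le_ofReal ?_)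
  rw [sub_eq_neg_add, exp_add, exp_sum]
  refine mul_le_mul_of_nonneg_left (prod_le_prod (fun k _ ↦ integral_nonneg fun ω ↦ (exp_pos _).le)
    fun k hk ↦ ?_) (exp_pos _).le
  rw [integral_exp_mul_sq_sub (hσ k (mem_range.1 hk)) (hmap k (mem_range.1 hk))
    (hr_lt (mem_range.1 hk))]
  exact exp_neg_half_mul_inv_sqrt_le (hr k (mem_range.1 hk))

lemma measure_exists_lt_mul_abs_sum_sq_sub_le
    (hmeas : ∀ k < N, Measurable[F (k + 1)] (ΔW k))
    (hindep : ∀ k < N, Indep (MeasurableSpace.comap (ΔW k) inferInstance) (F k) μ)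
    (hmap : ∀ k < N, μ.map (ΔW k) = gaussianReal 0 (σ k).toNNReal)
    (hσ : ∀ k < N, 0 < σ k) {s : ℝ} (hs : 0 < s) (hsσ : ∀ k < N, 2 * s * σ k ≤ 1 / 2) (x : ℝ) :
    μ {ω | ∃ n ≤ N, x < s * |∑ k ∈ range n, (ΔW k ω ^ 2 - σ k)|}
      ≤ ENNReal.ofReal (2 * exp (∑ k ∈ range N, (2 * s * σ k) ^ 2 - x)) := by
  have hneg : ∀ k < N, 2 * -s * σ k ≤ 1 / 2 := fun k hk ↦ by nlinarith [hσ k hk]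
  have hsubset : {ω | ∃ n ≤ N, x < s * |∑ k ∈ range n, (ΔW k ω ^ 2 - σ k)|}
      ⊆ {ω | ∃ n ≤ N, x ≤ s * ∑ k ∈ range n, (ΔW k ω ^ 2 - σ k)}
        ∪ {ω | ∃ n ≤ N, x ≤ -s * ∑ k ∈ range n, (ΔW k ω ^ 2 - σ k)} := by
    rintro ω ⟨n, hn, hx⟩
    rcases abs_cases (∑ k ∈ range n, (ΔW k ω ^ 2 - σ k)) with ⟨h, -⟩ | ⟨h, -⟩
    · exact Or.inl ⟨n, hn, by rw [h] at hx; exact hx.le⟩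
    · exact Or.inr ⟨n, hn, by rw [h] at hx; linarith⟩
  calc _ ≤ _ := measure_mono hsubset
    _ ≤ _ := measure_union_le _ _
    _ ≤ ENNReal.ofReal (exp (∑ k ∈ range N, (2 * s * σ k) ^ 2 - x))
        + ENNReal.ofReal (exp (∑ k ∈ range N, (2 * s * σ k) ^ 2 - x)) := by
      gcongr
      · exact measure_exists_le_mul_sum_sq_sub_le hmeas hindep hmap hσ hsσ x
      · simpa only [mul_neg, neg_mul, neg_sq] using
          measure_exists_le_mul_sum_sq_sub_le hmeas hindep hmap hσ hneg x
    _ = _ := by rw [← ENNReal.ofReal_add (exp_pos _).le (exp_pos _).le, ← two_mul]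

/-- Take `s = 1 / (4 K √Δ)` above. -/
lemma measure_exists_lt_mul_sqrt_lt_abs_sum_sq_sub_le
    (hmeas : ∀ k < N, Measurable[F (k + 1)] (ΔW k))
    (hindep : ∀ k < N, Indep (MeasurableSpace.comap (ΔW k) inferInstance) (F k) μ)
    (hmap : ∀ k < N, μ.map (ΔW k) = gaussianReal 0 (σ k).toNNReal)
    (hσ : ∀ k < N, 0 < σ k) {K Δ B : ℝ} (hK : 0 < K) (hΔ : 0 < Δ) (hΔ1 : Δ ≤ 1)
    (hσ_le : ∀ k < N, σ k ≤ K * Δ) (hσ_sum : ∑ k ∈ range N, σ k ≤ K * B) (L : ℝ) :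
    μ {ω | ∃ n ≤ N, L * √Δ < |∑ k ∈ range n, (ΔW k ω ^ 2 - σ k)|}
      ≤ ENNReal.ofReal (2 * exp (B / 4 - L / (4 * K))) := by
  have hτ : 0 < √Δ := sqrt_pos.2 hΔ
  set s := 1 / (4 * K * √Δ) with hs_def
  have hs : 0 < s := by positivity
  have hsK : 2 * s * (K * Δ) = √Δ / 2 := by
    rw [hs_def]; field_simp; rw [sq_sqrt hΔ.le]; ring
  have hsσ k (hk : k < N) : 2 * s * σ k ≤ √Δ / 2 :=
    hsK ▸ mul_le_mul_of_nonneg_left (hσ_le k hk) (by positivity)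
  have hsum : ∑ k ∈ range N, (2 * s * σ k) ^ 2 ≤ B / 4 := calc
    _ ≤ ∑ k ∈ range N, √Δ / 2 * (2 * s * σ k) := sum_le_sum fun k hk ↦ by
        rw [sq]
        exact mul_le_mul_of_nonneg_right (hsσ k (mem_range.1 hk))
          (mul_pos (by positivity) (hσ k (mem_range.1 hk))).le
    _ = √Δ * s * ∑ k ∈ range N, σ k := by rw [mul_sum]; exact sum_congr rfl fun k _ ↦ by ring
    _ ≤ √Δ * s * (K * B) := mul_le_mul_of_nonneg_left hσ_sum (by positivity)
    _ = B / 4 := by rw [hs_def]; field_simp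
  have hsubset : {ω | ∃ n ≤ N, L * √Δ < |∑ k ∈ range n, (ΔW k ω ^ 2 - σ k)|}
      = {ω | ∃ n ≤ N, L / (4 * K) < s * |∑ k ∈ range n, (ΔW k ω ^ 2 - σ k)|} := by
    have : L / (4 * K) = s * (L * √Δ) := by rw [hs_def]; field_simp
    simp_rw [this, mul_lt_mul_iff_right₀ hs]
  rw [hsubset]
  refine (measure_exists_lt_mul_abs_sum_sq_sub_le hmeas hindep hmap hσ hs
    (fun k hk ↦ (hsσ k hk).trans (by linarith [sqrt_le_one.2 hΔ1])) _).trans ?_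
  gcongr

lemma dtTilde_pos_s5 (a : ℝ) {dt : ℝ} (hdt : 0 < dt) : 0 < dtTilde a dt := by
  unfold dtTilde
  split_ifs with ha
  · exact hdt
  rcases lt_or_gt_of_ne ha with ha | ha
  · exact div_pos_of_neg_of_neg (by linarith [exp_lt_one_iff.2 (by nlinarith : 2 * a * dt < 0)])
      (by linarith)
  · exact div_pos (by linarith [one_lt_exp_iff.2 (by nlinarith : 0 < 2 * a * dt)]) (by linarith)

lemma dtTilde_le_exp_mul (a : ℝ) {dt : ℝ} (hdt : 0 ≤ dt) :
    dtTilde a dt ≤ exp (2 * |a| * dt) * dt := by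
  unfold dtTilde
  split_ifs with ha
  · simp [ha]
  rcases lt_or_gt_of_ne ha with ha | ha
  · -- `exp y - 1 ≥ y`, divided by `2 a < 0`
    rw [div_le_iff_of_neg (by linarith)]
    have hE := one_le_exp (by positivity : 0 ≤ 2 * |a| * dt)
    nlinarith [add_one_le_exp (2 * a * dt),
      mul_le_mul_of_nonpos_right hE (by nlinarith : 2 * a * dt ≤ 0)]
  · -- `exp y - 1 ≤ y exp y`, from `1 - y ≤ exp (-y)`
    have h : exp (2 * a * dt) - 1 ≤ 2 * a * dt * exp (2 * a * dt) := by
      have := mul_le_mul_of_nonneg_right (add_one_le_exp (-(2 * a * dt))) (exp_pos (2 * a * dt)).le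
      rw [← exp_add, neg_add_cancel, exp_zero] at this
      linarith
    rw [div_le_iff₀ (by linarith), abs_of_pos ha]
    linarith

lemma sub_le_dtMax {N : ℕ} (t : ℕ → ℝ) {k : ℕ} (hk : k < N) : t (k + 1) - t k ≤ dtMax N t :=
  le_ciSup (f := fun ν : Fin N ↦ t (ν + 1) - t ν) (Set.finite_range _).bddAbove ⟨k, hk⟩

namespace IsPartition

variable {N : ℕ} {T : ℝ} {t : ℕ → ℝ}

lemma sub_pos (ht : IsPartition N T t) {k : ℕ} (hk : k < N) : 0 < t (k + 1) - t k :=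
  _root_.sub_pos.2 (ht.2.2 k hk)

lemma sum_sub (ht : IsPartition N T t) : ∑ k ∈ range N, (t (k + 1) - t k) = T := by
  rw [sum_range_sub, ht.1, ht.2.1, sub_zero]

lemma sub_le (ht : IsPartition N T t) {k : ℕ} (hk : k < N) : t (k + 1) - t k ≤ T :=
  ht.sum_sub ▸ single_le_sum (f := fun i ↦ t (i + 1) - t i)
    (fun _ hi ↦ (ht.sub_pos (mem_range.1 hi)).le) (mem_range.2 hk)

lemma dtTilde_le (ht : IsPartition N T t) {a A B : ℝ} (ha : |a| ≤ A) (hT : T ≤ B)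
    {k : ℕ} (hk : k < N) :
    dtTilde a (t (k + 1) - t k) ≤ exp (2 * A * B) * (t (k + 1) - t k) := by
  have hdt := (ht.sub_pos hk).le
  refine (dtTilde_le_exp_mul a hdt).trans (mul_le_mul_of_nonneg_right (exp_le_exp.2 ?_) hdt)
  have := mul_le_mul ha ((ht.sub_le hk).trans hT) hdt ((abs_nonneg a).trans ha)
  linarith

lemma dtMax_pos (ht : IsPartition N T t) (hN : 1 ≤ N) : 0 < dtMax N t :=
  (ht.sub_pos hN).trans_le (sub_le_dtMax t hN)

end IsPartition

/-- high-probability bound on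
`max_ν |Σ_{μ<ν} ((ΔW_μ)² − Δt~_μ(a))|` for the Gaussian increments. -/
theorem statement5 (Ba BT : ℝ) :
    ∃ c > (0 : ℝ), ∃ C > (0 : ℝ),
      ∀ (Ω : Type) (mΩ : MeasurableSpace Ω) (μ : Measure Ω), IsProbabilityMeasure μ →
      ∀ (N : ℕ), 1 ≤ N →
      ∀ (T : ℝ) (t : ℕ → ℝ), IsPartition N T t → T ≤ BT →
      ∀ (a : ℝ), |a| ≤ Ba →
      ∀ (F : Filtration ℕ mΩ) (ΔW : ℕ → Ω → ℝ),
        (∀ ν < N, Measurable[F (ν + 1)] (ΔW ν)) →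
        (∀ ν < N, Indep (MeasurableSpace.comap (ΔW ν) inferInstance) (F ν) μ) →
        (∀ ν < N, μ.map (ΔW ν) = gaussianReal 0 (dtTilde a (t (ν + 1) - t ν)).toNNReal) →
        dtMax N t < c →
        ∀ Q : ℝ, C ≤ Q →
          μ {ω | ∃ ν ≤ N,
              C * Q ^ 2 * (dtMax N t) ^ ((1 : ℝ) / 2) <
                |∑ k ∈ Finset.range ν, ((ΔW k ω) ^ 2 - dtTilde a (t (k + 1) - t k))|}
            ≤ ENNReal.ofReal (Real.exp (-c * Q ^ 2)) := by
  set K := exp (2 * |Ba| * |BT|)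
  have hK : 1 ≤ K := one_le_exp (by positivity)
  refine ⟨1, one_pos, 4 * K * (|BT| + 2), by positivity, ?_⟩
  intro Ω mΩ μ _ N hN T t ht hT a ha F ΔW hmeas hindep hmap hΔ Q hQ
  have hσ_le k (hk : k < N) : dtTilde a (t (k + 1) - t k) ≤ K * (t (k + 1) - t k) :=
    ht.dtTilde_le (ha.trans (le_abs_self Ba)) (hT.trans (le_abs_self BT)) hk
  have hσ_sum : ∑ k ∈ range N, dtTilde a (t (k + 1) - t k) ≤ K * |BT| := calc
    _ ≤ ∑ k ∈ range N, K * (t (k + 1) - t k) := sum_le_sum fun k hk ↦ hσ_le k (mem_range.1 hk)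
    _ = K * T := by rw [← mul_sum, ht.sum_sub]
    _ ≤ K * |BT| := by gcongr; exact hT.trans (le_abs_self BT)
  rw [← sqrt_eq_rpow]
  refine (measure_exists_lt_mul_sqrt_lt_abs_sum_sq_sub_le hmeas hindep hmap
    (fun k hk ↦ dtTilde_pos_s5 a (ht.sub_pos hk)) (by positivity) (ht.dtMax_pos hN) hΔ.le
    (fun k hk ↦ (hσ_le k hk).trans (by gcongr; exact sub_le_dtMax t hk)) hσ_sum _).trans
    (ENNReal.ofReal_le_ofReal ?_)
  have hQ1 : 1 ≤ Q ^ 2 := one_le_pow₀ (by nlinarith [abs_nonneg BT])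
  rw [show 4 * K * (|BT| + 2) * Q ^ 2 / (4 * K) = (|BT| + 2) * Q ^ 2 by field_simp]
  calc 2 * exp (|BT| / 4 - (|BT| + 2) * Q ^ 2)
      ≤ exp 1 * exp (|BT| / 4 - (|BT| + 2) * Q ^ 2) := by
        gcongr; linarith [add_one_le_exp (1 : ℝ)]
    _ ≤ exp (-1 * Q ^ 2) := by
        rw [← exp_add]; gcongr; nlinarith [abs_nonneg BT]
end SumOfSquaredIncrements
end

section
/- Let A be a finite nonempty set, let K be a convex subset of the space of functions A → ℝ, let ε ≥ 0, and let v̂ ∈ K be efficient with tolerance ε, meaning there is no v ∈ K with v(a) < v̂(a) − ε for all a ∈ A. Then there exists p : A → ℝ with p(a) ≥ 0 for all a ∈ A and Σ_{a∈A} p(a) = 1, such that for every v ∈ K one has Σ_{a∈A} p(a)·v̂(a) ≤ Σ_{a∈A} p(a)·v(a) + ε. -/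
/-- convex-separation core of "Efficient Strategies are Bayesian" — if `v̂`
belongs to a convex set `K` of cost vectors and no `v ∈ K` satisfies `v(a) < v̂(a) − ε` for
all `a`, then there is a prior `p` for which `v̂` is `ε`-optimal in mean over `K`. -/
theorem statement18 {A : Type*} [Fintype A] [Nonempty A]
    (K : Set (A → ℝ)) (hK : Convex ℝ K) (ε : ℝ) (hε : 0 ≤ ε)
    (vhat : A → ℝ) (hvhat : vhat ∈ K)
    (heff : ¬ ∃ v ∈ K, ∀ a : A, v a < vhat a - ε) :
    ∃ p : A → ℝ, (∀ a, 0 ≤ p a) ∧ (∑ a, p a = 1) ∧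
      ∀ v ∈ K, ∑ a, p a * vhat a ≤ (∑ a, p a * v a) + ε := by
  classical
  set c : A → ℝ := ε • (1 : A → ℝ) - vhat with hc
  set s : Set (A → ℝ) := Set.pi Set.univ (fun _ : A => Set.Iio (0 : ℝ)) with hsdef
  set t : Set (A → ℝ) := (fun v => c + v) '' K with htdef
  have hsmem : ∀ x : A → ℝ, x ∈ s ↔ ∀ a, x a < 0 := by
    intro x; simp [hsdef, Set.mem_pi]
  have hsconv : Convex ℝ s := convex_pi fun _ _ => convex_Iio 0
  have hsopen : IsOpen s := isOpen_set_pi Set.finite_univ fun _ _ => isOpen_Iio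
  have htconv : Convex ℝ t := hK.translate c
  have hdisj : Disjoint s t := by
    rw [Set.disjoint_right]
    rintro _ ⟨v, hv, rfl⟩ hmem
    refine heff ⟨v, hv, fun a => ?_⟩
    have := (hsmem _).mp hmem a
    simp only [hc, Pi.add_apply, Pi.sub_apply, Pi.smul_apply, Pi.one_apply,
      smul_eq_mul, mul_one] at this
    linarith
  obtain ⟨f, u, hfs, hft⟩ := geometric_hahn_banach_open hsconv hsopen htconv hdisj
  -- f is nonpositive on the nonpositive orthant
  have hcone : ∀ x : A → ℝ, (∀ a, x a ≤ 0) → f x ≤ 0 := by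
    intro x hx
    by_contra h
    push_neg at h
    have key : ∀ T : ℝ, 0 < T → T * f x - f 1 < u := by
      intro T hT
      have hmem : T • x + (-1 : A → ℝ) ∈ s := by
        rw [hsmem]
        intro a
        have := hx a
        simp only [Pi.add_apply, Pi.smul_apply, Pi.neg_apply, Pi.one_apply, smul_eq_mul]
        nlinarith
      have := hfs _ hmem
      simpa [map_add, map_smul, smul_eq_mul, sub_eq_add_neg] using this
    have hT : 0 < (|u + f 1| + 1) / f x := div_pos (by positivity) h
    have h2 := key _ hT
    rw [div_mul_cancel₀ _ h.ne'] at h2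
    have := le_abs_self (u + f 1)
    linarith
  have hu : 0 ≤ u := by
    by_contra h
    push_neg at h
    have key : ∀ d : ℝ, 0 < d → -(d * f 1) < u := by
      intro d hd
      have hmem : (-d) • (1 : A → ℝ) ∈ s := by
        rw [hsmem]; intro a
        simp only [Pi.smul_apply, Pi.one_apply, smul_eq_mul, mul_one]
        linarith
      have := hfs _ hmem
      simpa [map_smul, smul_eq_mul, neg_mul] using this
    have h1 : 0 < f 1 := by have := key 1 one_pos; linarith
    have h2 := key (-u / (2 * f 1)) (div_pos (by linarith) (by linarith))
    have h3 : (-u / (2 * f 1)) * f 1 = -u / 2 := by field_simp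
    rw [h3] at h2
    linarith
  set q : A → ℝ := fun a => f (fun j => if a = j then 1 else 0) with hqdef
  have hsum : ∀ x : A → ℝ, f x = ∑ a, x a * q a := by
    intro x
    have := f.toLinearMap.pi_apply_eq_sum_univ x
    simpa [hqdef, smul_eq_mul] using this
  have hq : ∀ a, 0 ≤ q a := by
    intro a
    have := hcone (-(fun j => if a = j then 1 else 0)) (by
      intro b
      by_cases hab : a = b <;> simp [hab])
    rw [map_neg] at this
    simpa [hqdef] using this
  have hfK : ∀ v ∈ K, 0 ≤ f (c + v) := fun v hv =>
    le_trans hu (hft _ ⟨v, hv, rfl⟩)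
  set S : ℝ := ∑ a, q a with hSdef
  have hS : 0 < S := by
    rcases (Finset.sum_nonneg fun a _ => hq a).lt_or_eq with h | h
    · exact h
    · exfalso
      have hq0 : ∀ a, q a = 0 := fun a =>
        (Finset.sum_eq_zero_iff_of_nonneg (fun a _ => hq a)).mp h.symm a (Finset.mem_univ a)
      have hf0 : ∀ x : A → ℝ, f x = 0 := fun x => by
        rw [hsum x]; simp [hq0]
      have h1 : f (-1 : A → ℝ) < u := hfs _ (by rw [hsmem]; intro a; simp)
      have h2 : u ≤ f (c + vhat) := hft _ ⟨vhat, hvhat, rfl⟩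
      rw [hf0] at h1 h2
      linarith
  refine ⟨fun a => q a / S, fun a => div_nonneg (hq a) hS.le, ?_, ?_⟩
  · rw [← Finset.sum_div, ← hSdef, div_self hS.ne']
  · intro v hv
    have h0 := hfK v hv
    rw [hsum] at h0
    have key : ∑ a, q a * vhat a ≤ (∑ a, q a * v a) + ε * S := by
      have hexp : ∑ a, (c + v) a * q a
          = ε * S + (∑ a, q a * v a) - ∑ a, q a * vhat a := by
        simp only [hc, Pi.add_apply, Pi.sub_apply, Pi.smul_apply, Pi.one_apply,
          smul_eq_mul, mul_one, hSdef]
        rw [Finset.mul_sum, ← Finset.sum_add_distrib, ← Finset.sum_sub_distrib]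
        exact Finset.sum_congr rfl fun a _ => by ring
      rw [hexp] at h0
      linarith
    have hL : ∑ a, q a / S * vhat a = (∑ a, q a * vhat a) / S := by
      rw [Finset.sum_div]; exact Finset.sum_congr rfl fun a _ => by ring
    have hR : ∑ a, q a / S * v a = (∑ a, q a * v a) / S := by
      rw [Finset.sum_div]; exact Finset.sum_congr rfl fun a _ => by ring
    rw [hL, hR, div_le_iff₀ hS, add_mul, div_mul_cancel₀ _ hS.ne']
    linarith
end

section
/- Let I be a nonempty set, let E ⊆ I be a finite nonempty subset, let p : E → ℝ satisfy p(a) ≥ 0 for all a ∈ E and Σ_{a∈E} p(a) = 1, let f, g : I → ℝ, and let ρ_0, ρ_1 : I → ℝ with ρ_1(a) > 0 for all a ∈ I. Define R_f(a) = ρ_0(a) + ρ_1(a)·f(a) and R_g(a) = ρ_0(a) + ρ_1(a)·g(a). Assume: (i) Σ_{a∈E} p(a)·f(a) ≤ Σ_{a∈E} p(a)·g(a); and (ii) R_f(a) ≤ R_f(a_0) for every a ∈ I and every a_0 ∈ E (i.e. R_f attains its maximum over I at every point of E). Then there exists a_0 ∈ E such that R_f(a) ≤ R_g(a_0) for every a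 ∈ I; in particular, the worst-case regret of f is at most that of g. -/
/-- if the regret of `f` is maximized exactly on the support `E` of a prior
`p` for which `f` is Bayes-optimal compared to `g` (hypothesis (i)), then the worst-case
regret of `f` is at most that of `g` at some point of `E`. -/
theorem statement19 {I : Type*} [Nonempty I] (E : Finset I) (hE : E.Nonempty)
    (p : I → ℝ) (hp : ∀ a ∈ E, 0 ≤ p a) (hsum : ∑ a ∈ E, p a = 1)
    (f g ρ0 ρ1 : I → ℝ) (hρ1 : ∀ a, 0 < ρ1 a)
    (hi : ∑ a ∈ E, p a * f a ≤ ∑ a ∈ E, p a * g a)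
    (hii : ∀ a : I, ∀ a0 ∈ E, ρ0 a + ρ1 a * f a ≤ ρ0 a0 + ρ1 a0 * f a0) :
    ∃ a0 ∈ E, ∀ a : I, ρ0 a + ρ1 a * f a ≤ ρ0 a0 + ρ1 a0 * g a0 := by
  -- first find a0 ∈ E with f a0 ≤ g a0
  have hex : ∃ a0 ∈ E, f a0 ≤ g a0 := by
    by_contra h
    push_neg at h
    -- some point has positive weight
    have hpos : ∃ a ∈ E, 0 < p a := by
      by_contra hc
      push_neg at hc
      have : ∑ a ∈ E, p a = 0 := Finset.sum_eq_zero fun a ha =>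
        le_antisymm (hc a ha) (hp a ha)
      rw [hsum] at this; norm_num at this
    obtain ⟨a, haE, hpa⟩ := hpos
    have hlt : ∑ b ∈ E, p b * g b < ∑ b ∈ E, p b * f b := by
      apply Finset.sum_lt_sum
      · intro i hi'
        exact mul_le_mul_of_nonneg_left (le_of_lt (h i hi')) (hp i hi')
      · exact ⟨a, haE, by exact mul_lt_mul_of_pos_left (h a haE) hpa⟩
    linarith
  obtain ⟨a0, ha0E, hfg⟩ := hex
  refine ⟨a0, ha0E, fun a => ?_⟩
  have h1 := hii a a0 ha0E
  have h2 : ρ1 a0 * f a0 ≤ ρ1 a0 * g a0 :=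
    mul_le_mul_of_nonneg_left hfg (le_of_lt (hρ1 a0))
  linarith
end
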